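/- arXiv:2211.08155 — 2 statements merged into one kernel-verified Lean document; each statement's English description precedes it below -/
import Mathlib

section
/- In the Weyl algebra with [x,p] = iℏ, setting T = p²/(2√2) and V = x⁴/12, one has [T, [T, V]] = -ℏ⁴/4 - (ℏ²/4)(p²x² + x²p²). -/
/-- In the Weyl algebra with `[x,p] = iℏ`, with `T = p²/(2√2)` and `V = x⁴/12`,
`[T,[T,V]] = -ℏ⁴/4 - (ℏ²/4)(p²x² + x²p²)`. -/
theorem weyl_TTV_kerr
    (A : Type*) [Ring A] [Algebra ℂ A] (ℏ : ℝ) (x p : A)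
    (hxp : x * p - p * x = (Complex.I * (ℏ : ℂ)) • (1 : A))
    (T V : A)
    (hT : T = ((1 / (2 * (Real.sqrt 2 : ℂ)))) • p ^ 2)
    (hV : V = ((1 / 12 : ℂ)) • x ^ 4) :
    T * (T * V - V * T) - (T * V - V * T) * T
      = (-( (ℏ : ℂ) ^ 4 / 4)) • (1 : A)
        - (((ℏ : ℂ) ^ 2 / 4)) • (p ^ 2 * x ^ 2 + x ^ 2 * p ^ 2) := by
  set u : ℂ := Complex.I * (ℏ : ℂ) with hu
  have h1 : p * x = x * p - u • (1:A) := by rw [← hxp]; noncomm_ring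
  have h2 : p * x^2 = x^2*p - (2*u)•x := by
    calc p*x^2 = (p*x)*x := by noncomm_ring
    _ = (x*p - u•(1:A))*x := by rw [h1]
    _ = x*(p*x) - u•x := by
        noncomm_ring
        all_goals match_scalars <;> simp [smul_eq_mul] <;> ring
    _ = x*(x*p - u•(1:A)) - u•x := by rw [h1]
    _ = x^2*p - (2*u)•x := by
        noncomm_ring
        all_goals match_scalars <;> simp [smul_eq_mul] <;> ring
  have h3 : p*x^3 = x^3*p - (3*u)•x^2 := by
    calc p*x^3 = (p*x^2)*x := by noncomm_ring
    _ = (x^2*p - (2*u)•x)*x := by rw [h2]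
    _ = x^2*(p*x) - (2*u)•x^2 := by
        noncomm_ring
        all_goals match_scalars <;> simp [smul_eq_mul] <;> ring
    _ = x^2*(x*p - u•(1:A)) - (2*u)•x^2 := by rw [h1]
    _ = x^3*p - (3*u)•x^2 := by
        noncomm_ring
        all_goals match_scalars <;> simp [smul_eq_mul] <;> ring
  have h4 : p*x^4 = x^4*p - (4*u)•x^3 := by
    calc p*x^4 = (p*x^3)*x := by noncomm_ring
    _ = (x^3*p - (3*u)•x^2)*x := by rw [h3]
    _ = x^3*(p*x) - (3*u)•x^3 := by
        noncomm_ring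
        all_goals match_scalars <;> simp [smul_eq_mul] <;> ring
    _ = x^3*(x*p - u•(1:A)) - (3*u)•x^3 := by rw [h1]
    _ = x^4*p - (4*u)•x^3 := by
        noncomm_ring
        all_goals match_scalars <;> simp [smul_eq_mul] <;> ring
  have h5 : p^2*x^2 = x^2*p^2 - (4*u)•(x*p) + (2*u^2)•(1:A) := by
    calc p^2*x^2 = p*(p*x^2) := by noncomm_ring
    _ = p*(x^2*p - (2*u)•x) := by rw [h2]
    _ = (p*x^2)*p - (2*u)•(p*x) := by
        noncomm_ring
        all_goals match_scalars <;> simp [smul_eq_mul] <;> ring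
    _ = (x^2*p - (2*u)•x)*p - (2*u)•(x*p - u•(1:A)) := by rw [h2, h1]
    _ = x^2*p^2 - (4*u)•(x*p) + (2*u^2)•(1:A) := by
        noncomm_ring
        all_goals match_scalars <;> simp [smul_eq_mul] <;> ring
  have h7 : p^2*x^3 = x^3*p^2 - (6*u)•(x^2*p) + (6*u^2)•x := by
    calc p^2*x^3 = p*(p*x^3) := by noncomm_ring
    _ = p*(x^3*p - (3*u)•x^2) := by rw [h3]
    _ = (p*x^3)*p - (3*u)•(p*x^2) := by
        noncomm_ring
        all_goals match_scalars <;> simp [smul_eq_mul] <;> ring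
    _ = (x^3*p - (3*u)•x^2)*p - (3*u)•(x^2*p - (2*u)•x) := by rw [h3, h2]
    _ = x^3*p^2 - (6*u)•(x^2*p) + (6*u^2)•x := by
        noncomm_ring
        all_goals match_scalars <;> simp [smul_eq_mul] <;> ring
  have h6 : p^2*x^4 = x^4*p^2 - (8*u)•(x^3*p) + (12*u^2)•x^2 := by
    calc p^2*x^4 = p*(p*x^4) := by noncomm_ring
    _ = p*(x^4*p - (4*u)•x^3) := by rw [h4]
    _ = (p*x^4)*p - (4*u)•(p*x^3) := by
        noncomm_ring
        all_goals match_scalars <;> simp [smul_eq_mul] <;> ring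
    _ = (x^4*p - (4*u)•x^3)*p - (4*u)•(x^3*p - (3*u)•x^2) := by rw [h4, h3]
    _ = x^4*p^2 - (8*u)•(x^3*p) + (12*u^2)•x^2 := by
        noncomm_ring
        all_goals match_scalars <;> simp [smul_eq_mul] <;> ring
  have hW : p^2*(p^2*x^4 - x^4*p^2) - (p^2*x^4 - x^4*p^2)*p^2
      = (48*u^2)•(x^2*p^2) - (96*u^3)•(x*p) + (24*u^4)•(1:A) := by
    calc p^2*(p^2*x^4 - x^4*p^2) - (p^2*x^4 - x^4*p^2)*p^2
        = p^2*(p^2*x^4) - 2*((p^2*x^4)*p^2) + x^4*(p^2*p^2) := by noncomm_ring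
    _ = p^2*(x^4*p^2 - (8*u)•(x^3*p) + (12*u^2)•x^2)
        - 2*((x^4*p^2 - (8*u)•(x^3*p) + (12*u^2)•x^2)*p^2) + x^4*(p^2*p^2) := by
        rw [h6]
    _ = (p^2*x^4)*p^2 - (8*u)•((p^2*x^3)*p) + (12*u^2)•(p^2*x^2)
        - 2*((x^4*p^2 - (8*u)•(x^3*p) + (12*u^2)•x^2)*p^2) + x^4*(p^2*p^2) := by
        noncomm_ring
        all_goals match_scalars <;> simp [smul_eq_mul] <;> ring
    _ = (x^4*p^2 - (8*u)•(x^3*p) + (12*u^2)•x^2)*p^2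
        - (8*u)•((x^3*p^2 - (6*u)•(x^2*p) + (6*u^2)•x)*p)
        + (12*u^2)•(x^2*p^2 - (4*u)•(x*p) + (2*u^2)•(1:A))
        - 2*((x^4*p^2 - (8*u)•(x^3*p) + (12*u^2)•x^2)*p^2) + x^4*(p^2*p^2) := by
        rw [h6, h7, h5]
    _ = (48*u^2)•(x^2*p^2) - (96*u^3)•(x*p) + (24*u^4)•(1:A) := by
        noncomm_ring
        all_goals match_scalars <;> simp [smul_eq_mul] <;> ring
  have hcc : (1/(2*(Real.sqrt 2:ℂ)))*(1/(2*(Real.sqrt 2:ℂ))) = 1/8 := by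
    have hs2 : (Real.sqrt 2 : ℂ)^2 = 2 := by
      norm_cast
      exact Real.sq_sqrt (by norm_num)
    have hne : (Real.sqrt 2 : ℂ) ≠ 0 := by
      intro h
      rw [h] at hs2
      norm_num at hs2
    have h8 : (2*(Real.sqrt 2:ℂ))*(2*(Real.sqrt 2:ℂ)) = 8 := by
      linear_combination (4:ℂ) * hs2
    rw [div_mul_div_comm, h8]
    norm_num
  have hL : T * (T * V - V * T) - (T * V - V * T) * T
      = ((1/(2*(Real.sqrt 2:ℂ)))*(1/(2*(Real.sqrt 2:ℂ)))*(1/12:ℂ))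
          • (p^2*(p^2*x^4 - x^4*p^2) - (p^2*x^4 - x^4*p^2)*p^2) := by
    rw [hT, hV]
    simp only [smul_mul_assoc, mul_smul_comm, smul_smul, mul_sub, sub_mul, smul_sub]
    module
  have hu2 : u^2 = -(ℏ:ℂ)^2 := by
    rw [hu]; rw [mul_pow, Complex.I_sq]; ring
  rw [hL, hcc, hW, h5]
  match_scalars <;>
    first
      | linear_combination ((1:ℂ)/2) * hu2
      | linear_combination (-u) * hu2
      | linear_combination ((u^2 + (ℏ:ℂ)^2)/4) * hu2
end

section
/- In the Weyl algebra with [x,p] = iℏ, for all natural numbers n, m one has the normal-ordering formula pᵐ xⁿ = Σ_{k=0}^{min(n,m)} (-iℏ)ᵏ k! C(m,k) C(n,k) x^(n-k) p^(m-k), where C denotes the binomial coefficient. -/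
open Finset

lemma weyl_comm_pow {A : Type*} [Ring A] [Algebra ℂ A] (c : ℂ) (x p : A)
    (hpx : p * x = x * p - c • 1) (m : ℕ) :
    p ^ m * x = x * p ^ m - ((m : ℂ) * c) • p ^ (m - 1) := by
  induction m with
  | zero => simp
  | succ m ih =>
    rw [pow_succ, mul_assoc, hpx, mul_sub, ← mul_assoc, ih]
    cases m with
    | zero => simp
    | succ m =>
      rw [sub_mul, mul_assoc x, ← pow_succ, smul_mul_assoc, ← pow_succ, mul_smul_one]
      simp only [Nat.add_sub_cancel]
      push_cast
      module

lemma weyl_coef (c : ℂ) (m n k : ℕ) :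
    ((-c) ^ (k+1) * ((k+1).factorial : ℂ) * (m.choose (k+1) : ℂ) * ((n+1).choose (k+1) : ℂ))
      - (-c) ^ (k+1) * ((k+1).factorial : ℂ) * (m.choose (k+1) : ℂ) * (n.choose (k+1) : ℂ)
    = -(((-c) ^ k * (k.factorial : ℂ) * (m.choose k : ℂ) * (n.choose k : ℂ))
        * (((m - k : ℕ) : ℂ) * c)) := by
  have h1 : ((m.choose (k+1) : ℂ)) * ((k:ℂ)+1) = (m.choose k : ℂ) * ((m - k : ℕ) : ℂ) := by
    exact_mod_cast congrArg (Nat.cast : ℕ → ℂ) (Nat.choose_succ_right_eq m k)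
  have h2 : (((n+1).choose (k+1) : ℂ)) = (n.choose k : ℂ) + (n.choose (k+1) : ℂ) := by
    exact_mod_cast congrArg (Nat.cast : ℕ → ℂ) (Nat.choose_succ_succ' n k)
  rw [h2]
  have hf : (((k+1).factorial : ℂ)) = ((k:ℂ)+1) * (k.factorial : ℂ) := by
    push_cast [Nat.factorial_succ]; ring
  rw [hf]
  linear_combination ((-c)^(k+1) * (k.factorial : ℂ) * (n.choose k : ℂ)) * h1

lemma weyl_aux {A : Type*} [Ring A] [Algebra ℂ A] (c : ℂ) (x p : A)
    (hpx : p * x = x * p - c • 1) (m n : ℕ) :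
    p ^ m * x ^ n = ∑ k ∈ range (n+1),
      ((-c) ^ k * (k.factorial : ℂ) * (m.choose k : ℂ) * (n.choose k : ℂ))
        • (x ^ (n-k) * p ^ (m-k)) := by
  induction n with
  | zero => simp
  | succ n ih =>
    have step : p ^ m * x ^ (n+1) = ∑ k ∈ range (n+1),
        (((-c) ^ k * (k.factorial : ℂ) * (m.choose k : ℂ) * (n.choose k : ℂ))
            • (x ^ (n+1-k) * p ^ (m-k))
         - (((-c) ^ k * (k.factorial : ℂ) * (m.choose k : ℂ) * (n.choose k : ℂ))
              * (((m - k : ℕ) : ℂ) * c)) • (x ^ (n-k) * p ^ (m-(k+1)))) := by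
      rw [pow_succ, ← mul_assoc, ih, sum_mul]
      refine sum_congr rfl fun k hk => ?_
      have hnk : n - k + 1 = n + 1 - k := by
        simp only [mem_range] at hk; omega
      have hmk : m - k - 1 = m - (k+1) := by omega
      rw [smul_mul_assoc, mul_assoc (x ^ (n-k)), weyl_comm_pow c x p hpx,
        mul_sub, ← mul_assoc (x ^ (n-k)), ← pow_succ, hnk,
        mul_smul_comm, hmk, smul_sub, smul_smul]
    rw [step, sum_sub_distrib]
    have hsplit : ∀ k ∈ range (n+2),
        (((-c) ^ k * (k.factorial : ℂ) * (m.choose k : ℂ) * ((n+1).choose k : ℂ)))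
          • (x ^ (n+1-k) * p ^ (m-k))
        = ((-c) ^ k * (k.factorial : ℂ) * (m.choose k : ℂ) * (n.choose k : ℂ))
            • (x ^ (n+1-k) * p ^ (m-k))
          + (((-c) ^ k * (k.factorial : ℂ) * (m.choose k : ℂ) * ((n+1).choose k : ℂ))
             - (-c) ^ k * (k.factorial : ℂ) * (m.choose k : ℂ) * (n.choose k : ℂ))
            • (x ^ (n+1-k) * p ^ (m-k)) := by
      intro k _
      rw [← add_smul]
      congr 1
      ring
    rw [sum_congr rfl hsplit, sum_add_distrib]
    have e1 : ∑ k ∈ range (n+2),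
        ((-c) ^ k * (k.factorial : ℂ) * (m.choose k : ℂ) * (n.choose k : ℂ))
          • (x ^ (n+1-k) * p ^ (m-k))
        = ∑ k ∈ range (n+1),
        ((-c) ^ k * (k.factorial : ℂ) * (m.choose k : ℂ) * (n.choose k : ℂ))
          • (x ^ (n+1-k) * p ^ (m-k)) := by
      rw [sum_range_succ]
      have hz : ((n.choose (n+1) : ℂ)) = 0 := by
        simp [Nat.choose_eq_zero_of_lt]
      rw [hz]
      simp
    have e2 : ∑ k ∈ range (n+2),
        (((-c) ^ k * (k.factorial : ℂ) * (m.choose k : ℂ) * ((n+1).choose k : ℂ))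
           - (-c) ^ k * (k.factorial : ℂ) * (m.choose k : ℂ) * (n.choose k : ℂ))
          • (x ^ (n+1-k) * p ^ (m-k))
        = -∑ k ∈ range (n+1),
            (((-c) ^ k * (k.factorial : ℂ) * (m.choose k : ℂ) * (n.choose k : ℂ))
              * (((m - k : ℕ) : ℂ) * c)) • (x ^ (n-k) * p ^ (m-(k+1))) := by
      rw [sum_range_succ']
      have h0 : (((-c) ^ 0 * ((0:ℕ).factorial : ℂ) * (m.choose 0 : ℂ) * ((n+1).choose 0 : ℂ))
          - (-c) ^ 0 * ((0:ℕ).factorial : ℂ) * (m.choose 0 : ℂ) * (n.choose 0 : ℂ)) = 0 := by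
        simp
      rw [h0, zero_smul, add_zero, ← Finset.sum_neg_distrib]
      refine sum_congr rfl fun k hk => ?_
      rw [weyl_coef, neg_smul, Nat.succ_sub_succ]
    rw [e1, e2]
    abel

open Finset in
/-- Normal-ordering in the Weyl algebra with `[x,p] = iℏ`:
`pᵐ xⁿ = Σ_{k=0}^{min n m} (-iℏ)ᵏ k! C(m,k) C(n,k) x^(n-k) p^(m-k)`. -/
theorem weyl_normal_ordering
    (A : Type*) [Ring A] [Algebra ℂ A] (ℏ : ℝ) (x p : A)
    (hxp : x * p - p * x = (Complex.I * (ℏ : ℂ)) • (1 : A))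
    (n m : ℕ) :
    p ^ m * x ^ n
      = ∑ k ∈ Finset.range (min n m + 1),
          ((-(Complex.I * (ℏ : ℂ))) ^ k * (k.factorial : ℂ)
            * (m.choose k : ℂ) * (n.choose k : ℂ)) • (x ^ (n - k) * p ^ (m - k)) := by
  have hpx : p * x = x * p - (Complex.I * (ℏ : ℂ)) • 1 := by
    rw [← hxp]; abel
  rw [weyl_aux (Complex.I * (ℏ : ℂ)) x p hpx m n]
  symm
  apply sum_subset
  · intro k hk; simp only [mem_range] at *; omega
  · intro k hk hk'
    simp only [mem_range] at *
    have : m < k := by omega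
    simp [Nat.choose_eq_zero_of_lt this]
end
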